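/- Define the four BB84 qubit states ρ_1 := (1/2)(1 + σz), ρ_2 := (1/2)(1 − σz), ρ_3 := (1/2)(1 + σx), ρ_4 := (1/2)(1 − σx), and for η ∈ [0,1] the noisy states ρ^η_a := η • ρ_a + (1−η) • (1/2) • 1. Then the set of states (ρ^η_a)_{a=1,...,4} on ℂ² is classical if and only if η ≤ √2/2; i.e. the white-noise robustness of the BB84 state set equals 1/√2. -/

import Mathlib

open Matrix BigOperators
open scoped ComplexOrder

noncomputable section

def σx : Matrix (Fin 2) (Fin 2) ℂ := !![0, 1; 1, 0]
def σz : Matrix (Fin 2) (Fin 2) ℂ := !![1, 0; 0, -1]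

/-- The noncontextual preparation-assignment polytope of a set of states. -/
def statesPolytope {d : ℕ} {A : Type*} [Fintype A]
    (ρ : A → Matrix (Fin d) (Fin d) ℂ) : Set (A → ℝ) :=
  {q | (∀ a, 0 ≤ q a) ∧ (∑ a : A, q a = 1) ∧
    ∀ α : A → ℝ, (∑ a : A, α a • ρ a = 0) → (∑ a : A, α a * q a = 0)}

/-- A set of states is classical. -/
def IsClassicalStates {d : ℕ} {A : Type*} [Fintype A]
    (ρ : A → Matrix (Fin d) (Fin d) ℂ) : Prop :=
  ∃ (n : ℕ) (σ : Fin n → Matrix (Fin d) (Fin d) ℂ) (q : Fin n → A → ℝ),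
    (∀ l, (σ l).PosSemidef) ∧
    (∀ l, q l ∈ statesPolytope ρ) ∧
    (∀ a : A, ρ a = ∑ l, q l a • σ l)

/-- The four BB84 qubit states. -/
def bb84States : Fin 4 → Matrix (Fin 2) (Fin 2) ℂ :=
  ![(2 : ℝ)⁻¹ • ((1 : Matrix (Fin 2) (Fin 2) ℂ) + σz),
    (2 : ℝ)⁻¹ • ((1 : Matrix (Fin 2) (Fin 2) ℂ) - σz),
    (2 : ℝ)⁻¹ • ((1 : Matrix (Fin 2) (Fin 2) ℂ) + σx),
    (2 : ℝ)⁻¹ • ((1 : Matrix (Fin 2) (Fin 2) ℂ) - σx)]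

/-!
Write a qubit state with real Bloch vector `(x, 0, z)` as `blochState z x = (1 + z σz + x σx) / 2`;
the noisy BB84 states are the Bloch states with vectors `±η e_z`, `±η e_x`, and they satisfy the
dependency `ρ₁ + ρ₂ = ρ₃ + ρ₄`.

Necessity: in a classical model this dependency forces `q_λ(1) + q_λ(2) = q_λ(3) + q_λ(4) = 1/2`.
Hence `4η = ∑_λ (q_λ(1) - q_λ(2)) ⟨σz⟩_λ + (q_λ(3) - q_λ(4)) ⟨σx⟩_λ`, and since the Bloch vector
of a positive semidefinite `σ̃_λ` is no longer than its trace, Cauchy–Schwarz bounds the `λ`-th term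
by `tr σ̃_λ / √2`, while the traces add up to `4`.

Sufficiency: take the four pure states `σ_λ` with Bloch vectors `(±1, 0, ±1) / √2` and the weights
`q_λ(a) = (1 + √2 ⟨n_λ, r_a⟩) / 4`. These are affine in the state `ρ_a`, so they respect every
linear dependency among the states; they are nonnegative as soon as `√2 η ≤ 1`; and
`ρ ↦ ∑_λ q_λ(ρ) σ_λ` is the identity on all Bloch states in the `x`–`z` plane.
-/

def expectation {n : Type*} [Fintype n] (O M : Matrix n n ℂ) : ℝ := (O * M).trace.re

theorem expectation_sum_smul {n ι : Type*} [Fintype n] [Fintype ι] (O : Matrix n n ℂ)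
    (c : ι → ℝ) (M : ι → Matrix n n ℂ) :
    expectation O (∑ i, c i • M i) = ∑ i, c i * expectation O (M i) := by
  simp [expectation, Matrix.mul_sum, trace_sum, Complex.re_sum, trace_smul]

theorem expectation_one {n : Type*} [Fintype n] [DecidableEq n] (M : Matrix n n ℂ) :
    expectation 1 M = M.trace.re := by
  simp [expectation]

theorem expectation_σz (M : Matrix (Fin 2) (Fin 2) ℂ) :
    expectation σz M = (M 0 0).re - (M 1 1).re := by
  simp [expectation, trace_fin_two, σz, vecMul, dotProduct, Fin.sum_univ_two, sub_eq_add_neg]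

theorem expectation_σx (M : Matrix (Fin 2) (Fin 2) ℂ) :
    expectation σx M = (M 1 0).re + (M 0 1).re := by
  simp [expectation, trace_fin_two, σx, vecMul, dotProduct, Fin.sum_univ_two]

theorem Matrix.PosSemidef.expectation_one_nonneg {n : Type*} [Fintype n] [DecidableEq n]
    {M : Matrix n n ℂ} (hM : M.PosSemidef) : 0 ≤ expectation 1 M := by
  simpa [expectation_one] using (Complex.nonneg_iff.mp hM.trace_nonneg).1

theorem Matrix.PosSemidef.expectation_σz_sq_add_expectation_σx_sq_le
    {M : Matrix (Fin 2) (Fin 2) ℂ} (hM : M.PosSemidef) :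
    expectation σz M ^ 2 + expectation σx M ^ 2 ≤ expectation 1 M ^ 2 := by
  have hdet := (Complex.nonneg_iff.mp hM.det_nonneg).1
  have hHerm := hM.isHermitian.apply
  have h10 : M 1 0 = star (M 0 1) := (hHerm 1 0).symm
  have h00 : (M 0 0).im = 0 := Complex.conj_eq_iff_im.mp (hHerm 0 0)
  have h11 : (M 1 1).im = 0 := Complex.conj_eq_iff_im.mp (hHerm 1 1)
  simp only [expectation_one, expectation_σz, expectation_σx, trace_fin_two, det_fin_two, h10,
    Complex.add_re, Complex.sub_re, Complex.mul_re, Complex.star_def, Complex.conj_re,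
    Complex.conj_im, h00, h11] at hdet ⊢
  nlinarith [sq_nonneg (M 0 1).im]

def blochState (z x : ℝ) : Matrix (Fin 2) (Fin 2) ℂ :=
  (2 : ℝ)⁻¹ • (1 + z • σz + x • σx)

theorem blochState_eq (z x : ℝ) :
    blochState z x = !![(1 + (z : ℂ)) / 2, (x : ℂ) / 2; (x : ℂ) / 2, (1 - (z : ℂ)) / 2] := by
  ext i j; fin_cases i <;> fin_cases j <;>
    simp [blochState, σx, σz, Complex.real_smul] <;> ring

@[simp] theorem expectation_one_blochState (z x : ℝ) : expectation 1 (blochState z x) = 1 := by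
  simp [expectation_one, blochState_eq, trace_fin_two]; ring

@[simp] theorem expectation_σz_blochState (z x : ℝ) : expectation σz (blochState z x) = z := by
  simp [expectation_σz, blochState_eq]; ring

@[simp] theorem expectation_σx_blochState (z x : ℝ) : expectation σx (blochState z x) = x := by
  simp [expectation_σx, blochState_eq]

theorem blochState_add_blochState_neg (z x : ℝ) : blochState z x + blochState (-z) (-x) = 1 := by
  rw [blochState_eq, blochState_eq]
  ext i j; fin_cases i <;> fin_cases j <;> simp <;> ring

/-- A pure state is a Hermitian idempotent `P`, hence equal to `Pᴴ * P`. -/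
theorem blochState_posSemidef {z x : ℝ} (h : z ^ 2 + x ^ 2 = 1) :
    (blochState z x).PosSemidef := by
  have hHerm : (blochState z x)ᴴ = blochState z x := by
    ext i j; fin_cases i <;> fin_cases j <;> simp [blochState_eq]
  have hIdem : blochState z x * blochState z x = blochState z x := by
    have hC : (z : ℂ) ^ 2 + (x : ℂ) ^ 2 = 1 := by exact_mod_cast h
    rw [blochState_eq]
    ext i j; fin_cases i <;> fin_cases j <;>
      simp [Matrix.mul_apply, Fin.sum_univ_two] <;>
      first | ring1 | linear_combination (1 / 4 : ℂ) * hC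
  rw [← hIdem]
  nth_rewrite 1 [← hHerm]
  exact posSemidef_conjTranspose_mul_self _

theorem add_eq_half_of_mem_statesPolytope {d : ℕ} {ρ : Fin 4 → Matrix (Fin d) (Fin d) ℂ}
    (hρ : ρ 0 + ρ 1 = ρ 2 + ρ 3) {q : Fin 4 → ℝ} (hq : q ∈ statesPolytope ρ) :
    q 0 + q 1 = 1 / 2 ∧ q 2 + q 3 = 1 / 2 := by
  obtain ⟨-, hsum, hdep⟩ := hq
  have hbal := hdep ![1, 1, -1, -1] (by simp [Fin.sum_univ_four, ← sub_eq_add_neg, hρ])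
  simp only [Fin.sum_univ_four, cons_val_zero, cons_val_one, cons_val, one_mul, neg_mul]
    at hsum hbal
  constructor <;> linarith

theorem two_mul_add_mul_le_sqrt_two_mul {a b u v t : ℝ} (ha : |a| ≤ 1 / 2) (hb : |b| ≤ 1 / 2)
    (huv : u ^ 2 + v ^ 2 ≤ t ^ 2) (ht : 0 ≤ t) : 2 * (a * u + b * v) ≤ √2 * t := by
  have hab : a ^ 2 + b ^ 2 ≤ 1 / 2 := by
    nlinarith [sq_abs a, sq_abs b, abs_nonneg a, abs_nonneg b]
  have hsq : (2 * (a * u + b * v)) ^ 2 ≤ (√2 * t) ^ 2 := by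
    rw [mul_pow, mul_pow, Real.sq_sqrt zero_le_two]
    nlinarith [sq_nonneg (a * v - b * u),
      mul_le_mul hab huv (by positivity) (by norm_num : (0 : ℝ) ≤ 1 / 2)]
  exact (abs_le_of_sq_le_sq' hsq (by positivity)).2

theorem IsClassicalStates.bb84_inequality {ρ : Fin 4 → Matrix (Fin 2) (Fin 2) ℂ}
    (h : IsClassicalStates ρ) (hρ : ρ 0 + ρ 1 = ρ 2 + ρ 3) :
    expectation σz (ρ 0) - expectation σz (ρ 1) + expectation σx (ρ 2) - expectation σx (ρ 3) ≤
      √2 * (expectation 1 (ρ 0) + expectation 1 (ρ 1)) := by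
  obtain ⟨n, σ, q, hσ, hq, hρq⟩ := h
  have hexp (O : Matrix (Fin 2) (Fin 2) ℂ) (a : Fin 4) :
      expectation O (ρ a) = ∑ l, q l a * expectation O (σ l) := by
    rw [hρq a, expectation_sum_smul]
  have hhalf (l : Fin n) := add_eq_half_of_mem_statesPolytope hρ (hq l)
  have hterm (l : Fin n) : 2 * ((q l 0 - q l 1) * expectation σz (σ l) +
      (q l 2 - q l 3) * expectation σx (σ l)) ≤ √2 * expectation 1 (σ l) := by
    have hq0 := (hq l).1
    refine two_mul_add_mul_le_sqrt_two_mul ?_ ?_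
      (hσ l).expectation_σz_sq_add_expectation_σx_sq_le (hσ l).expectation_one_nonneg
    · rw [abs_le]; constructor <;> linarith [hq0 0, hq0 1, hhalf l]
    · rw [abs_le]; constructor <;> linarith [hq0 2, hq0 3, hhalf l]
  have htrace : expectation 1 (ρ 0) + expectation 1 (ρ 1) = ∑ l, expectation 1 (σ l) / 2 := by
    simp only [hexp, ← Finset.sum_add_distrib]
    refine Finset.sum_congr rfl fun l _ => ?_
    linear_combination expectation 1 (σ l) * (hhalf l).1
  have hlhs : expectation σz (ρ 0) - expectation σz (ρ 1) + expectation σx (ρ 2) -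
      expectation σx (ρ 3) = ∑ l, ((q l 0 - q l 1) * expectation σz (σ l) +
        (q l 2 - q l 3) * expectation σx (σ l)) := by
    simp only [hexp, ← Finset.sum_sub_distrib, ← Finset.sum_add_distrib]
    exact Finset.sum_congr rfl fun l _ => by ring
  rw [hlhs, htrace, Finset.mul_sum]
  exact Finset.sum_le_sum fun l _ => by linarith [hterm l]

def signZ : Fin 4 → ℝ := ![1, 1, -1, -1]

def signX : Fin 4 → ℝ := ![1, -1, 1, -1]

def diagonalState (l : Fin 4) : Matrix (Fin 2) (Fin 2) ℂ :=
  blochState (signZ l / √2) (signX l / √2)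

def diagonalWeight (l : Fin 4) (z x : ℝ) : ℝ :=
  (1 + √2 * (signZ l * z + signX l * x)) / 4

theorem diagonalState_posSemidef (l : Fin 4) : (diagonalState l).PosSemidef := by
  apply blochState_posSemidef
  fin_cases l <;> simp [signZ, signX, div_pow] <;> norm_num

theorem diagonalWeight_nonneg (l : Fin 4) {z x : ℝ} (h : |z| + |x| ≤ √2 / 2) :
    0 ≤ diagonalWeight l z x := by
  have hw : -(√2 / 2) ≤ signZ l * z + signX l * x := by
    fin_cases l <;> simp [signZ, signX] <;>
      linarith [neg_abs_le z, neg_abs_le x, le_abs_self z, le_abs_self x]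
  have hs : √2 * (√2 / 2) = 1 := by
    rw [← mul_div_assoc, Real.mul_self_sqrt zero_le_two]; norm_num
  unfold diagonalWeight
  nlinarith [mul_le_mul_of_nonneg_left hw (Real.sqrt_nonneg 2)]

theorem sum_diagonalWeight_smul_diagonalState (z x : ℝ) :
    ∑ l, diagonalWeight l z x • diagonalState l = blochState z x := by
  have hs : √2 ≠ 0 := by positivity
  ext i j
  fin_cases i <;> fin_cases j <;>
    simp [diagonalWeight, diagonalState, blochState_eq, signZ, signX, Fin.sum_univ_four] <;>
    field_simp <;> ring

theorem isClassicalStates_blochState {z x : Fin 4 → ℝ} (hz : ∑ a, z a = 0) (hx : ∑ a, x a = 0)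
    (h : ∀ a, |z a| + |x a| ≤ √2 / 2) :
    IsClassicalStates fun a => blochState (z a) (x a) := by
  refine ⟨4, diagonalState, fun l a => diagonalWeight l (z a) (x a), diagonalState_posSemidef,
    fun l => ⟨fun a => diagonalWeight_nonneg l (h a), ?_, fun α hα => ?_⟩,
    fun a => (sum_diagonalWeight_smul_diagonalState (z a) (x a)).symm⟩
  · simp only [diagonalWeight, Fin.sum_univ_four] at hz hx ⊢
    linear_combination (√2 * signZ l / 4) * hz + (√2 * signX l / 4) * hx
  · have hmoment (O : Matrix (Fin 2) (Fin 2) ℂ) :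
        ∑ a, α a * expectation O (blochState (z a) (x a)) = 0 := by
      rw [← expectation_sum_smul, hα, expectation, mul_zero, trace_zero, Complex.zero_re]
    have hα₁ := hmoment 1
    have hαz := hmoment σz
    have hαx := hmoment σx
    simp only [expectation_one_blochState, expectation_σz_blochState, expectation_σx_blochState,
      Fin.sum_univ_four] at hα₁ hαz hαx
    simp only [diagonalWeight, Fin.sum_univ_four]
    linear_combination (1 / 4 : ℝ) * hα₁ + (√2 * signZ l / 4) * hαz + (√2 * signX l / 4) * hαx

theorem noisy_bb84States_eq (η : ℝ) :
    (fun a : Fin 4 =>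
      η • bb84States a + ((1 - η) * (2 : ℝ)⁻¹) • (1 : Matrix (Fin 2) (Fin 2) ℂ)) =
      fun a => blochState (![η, -η, 0, 0] a) (![0, 0, η, -η] a) := by
  funext a
  rw [blochState_eq]
  ext i j
  fin_cases a <;> fin_cases i <;> fin_cases j <;>
    simp [bb84States, σx, σz, Complex.real_smul] <;> ring

theorem bb84_states_white_noise_robustness (η : ℝ) (hη : η ∈ Set.Icc (0 : ℝ) 1) :
    IsClassicalStates
        (fun a : Fin 4 =>
          η • bb84States a + ((1 - η) * (2 : ℝ)⁻¹) • (1 : Matrix (Fin 2) (Fin 2) ℂ)) ↔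
      η ≤ Real.sqrt 2 / 2 := by
  rw [noisy_bb84States_eq]
  constructor
  · intro h
    have hbound := h.bb84_inequality <| by
      simpa using
        (blochState_add_blochState_neg η 0).trans (blochState_add_blochState_neg 0 η).symm
    simp only [Matrix.cons_val, expectation_σz_blochState, expectation_σx_blochState,
      expectation_one_blochState, sub_neg_eq_add] at hbound
    linarith
  · intro h
    refine isClassicalStates_blochState (by simp [Fin.sum_univ_four])
      (by simp [Fin.sum_univ_four]) fun a => ?_
    fin_cases a <;> simp [abs_of_nonneg hη.1, h]

end
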